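/- Let C be a commutative unital ring, G a semigroup with zero, and S the set of ~-equivalence classes of G other than the class of 0. Then there exists a minimal C-linear trace t : \overline{CG} → C^{(S)}, where C^{(S)} is the C-algebra of finitely supported functions S → C with pointwise operations (the direct sum of |S| copies of C). -/

import Mathlib

/-- The one-step relation: `x = a*b` and `y = b*a`. -/
def simStep {G : Type*} [Mul G] (x y : G) : Prop := ∃ a b : G, x = a * b ∧ y = b * a

/-- The relation `~` on a semigroup: the reflexive-transitive closure of `simStep`. -/
def sim {G : Type*} [Mul G] : G → G → Prop := Relation.ReflTransGen simStep

theorem sim_equiv {G : Type*} [Mul G] : Equivalence (sim (G := G)) :=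
  ⟨fun _ => Relation.ReflTransGen.refl,
   fun {x y} h => by
      change Relation.ReflTransGen simStep x y at h
      change Relation.ReflTransGen simStep y x
      induction h with
      | refl => exact Relation.ReflTransGen.refl
      | tail _ hbc ih =>
        obtain ⟨a, b, h1, h2⟩ := hbc
        exact Relation.ReflTransGen.head ⟨b, a, h2, h1⟩ ih,
   fun h1 h2 => Relation.ReflTransGen.trans h1 h2⟩

/-- The setoid on `G` given by `~`. -/
def simSetoid (G : Type*) [Mul G] : Setoid G := ⟨sim, sim_equiv⟩

/-- The additive subgroup `[A,A]` generated by commutators. -/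
def commutatorSubgroup (A : Type*) [NonUnitalNonAssocRing A] : AddSubgroup A :=
  AddSubgroup.closure {x | ∃ a b : A, x = a * b - b * a}

/-- The ideal `I₀` of the semigroup ring `CG` consisting of functions supported in `{0}`. -/
noncomputable def I0 (C G : Type*) [CommRing C] [SemigroupWithZero G] :
    TwoSidedIdeal (MonoidAlgebra C G) :=
  TwoSidedIdeal.mk' {f : MonoidAlgebra C G | ∀ g : G, g ≠ 0 → f.coeff g = 0}
    (fun _ _ => rfl)
    (fun {x y} hx hy g hg => by
      show (x + y).coeff g = 0
      rw [MonoidAlgebra.coeff_add, Finsupp.add_apply, hx g hg, hy g hg, add_zero])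
    (fun {x} hx g hg => by
      show (-x).coeff g = 0
      rw [MonoidAlgebra.coeff_neg, Finsupp.neg_apply, hx g hg, neg_zero])
    (fun {x y} hy g hg => by
      classical
      rw [MonoidAlgebra.mul_apply]
      rw [Finsupp.sum]
      refine Finset.sum_eq_zero fun a _ => ?_
      rw [Finsupp.sum]
      refine Finset.sum_eq_zero fun b hb => ?_
      have hb0 : b = 0 := by
        by_contra h
        exact Finsupp.mem_support_iff.mp hb (hy b h)
      subst hb0
      rw [mul_zero, if_neg fun h => hg h.symm])
    (fun {x y} hx g hg => by
      classical
      rw [MonoidAlgebra.mul_apply]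
      rw [Finsupp.sum]
      refine Finset.sum_eq_zero fun a ha => ?_
      rw [Finsupp.sum]
      refine Finset.sum_eq_zero fun b _ => ?_
      have ha0 : a = 0 := by
        by_contra h
        exact Finsupp.mem_support_iff.mp ha (hx a h)
      subst ha0
      rw [zero_mul, if_neg fun h => hg h.symm])

/-- The contracted semigroup ring `\overline{CG} = CG / I₀`. -/
abbrev ContractedSemigroupRing (C G : Type*) [CommRing C] [SemigroupWithZero G] :=
  (I0 C G).ringCon.Quotient

/-- The quotient map `π : CG → \overline{CG}`. -/
noncomputable def toCSR (C G : Type*) [CommRing C] [SemigroupWithZero G]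
    (f : MonoidAlgebra C G) : ContractedSemigroupRing C G := f

/-- The map `f ↦ ∑_g f(g) • δ(g)` from `CG` to `R`. -/
def elemSum (C : Type*) {G R : Type*} [CommRing C] [SemigroupWithZero G]
    [AddCommMonoid R] [Module C R] (δ : G → R) (f : MonoidAlgebra C G) : R :=
  f.coeff.sum fun g c => c • δ g

/-!
Summing coefficients over each `~`-class is a `C`-linear map `classSum : CG → C^{(G/~)}`, and it
is a trace because `ab ~ ba`. Its kernel is `[CG, CG]`: moving every coefficient of `f` to a
chosen representative of its class changes `f` only by commutators `ab - ba`, and the result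
depends only on `classSum f`. Forgetting the class of `0` kills `I₀`, so the trace descends to
`\overline{CG}`; if it vanishes at the image of `f`, then `f - δ₀ c ∈ [CG, CG]` for some `c`, and
`δ₀ c` is zero in `\overline{CG}`.
-/

section

open MonoidAlgebra

theorem map_mem_commutatorSubgroup {A B : Type*} [NonUnitalNonAssocRing A]
    [NonUnitalNonAssocRing B] (φ : A →ₙ+* B) {x : A} (hx : x ∈ commutatorSubgroup A) :
    φ x ∈ commutatorSubgroup B := by
  induction hx using AddSubgroup.closure_induction with
  | mem x hx =>
    obtain ⟨a, b, rfl⟩ := hx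
    exact AddSubgroup.subset_closure ⟨φ a, φ b, by simp⟩
  | zero => simp [zero_mem]
  | add x y _ _ hx hy => simpa using add_mem hx hy
  | neg x _ hx => simpa using neg_mem hx

variable {C G : Type*} [CommRing C]

section Mul

variable [Mul G]

noncomputable def classSum : MonoidAlgebra C G →ₗ[C] Quotient (simSetoid G) →₀ C :=
  Finsupp.lmapDomain C C (Quotient.mk _) ∘ₗ (coeffLinearEquiv C).toLinearMap

theorem classSum_apply (f : MonoidAlgebra C G) :
    classSum f = Finsupp.mapDomain (Quotient.mk _) f.coeff :=
  rfl

@[simp]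
theorem classSum_single (g : G) (c : C) :
    classSum (single g c) = Finsupp.single (Quotient.mk (simSetoid G) g) c :=
  Finsupp.mapDomain_single

theorem classSum_mul_comm (f f' : MonoidAlgebra C G) : classSum (f * f') = classSum (f' * f) := by
  induction f using MonoidAlgebra.induction_linear with
  | zero => simp
  | add f₁ f₂ h₁ h₂ => simp only [add_mul, mul_add, map_add, h₁, h₂]
  | single a c =>
    induction f' using MonoidAlgebra.induction_linear with
    | zero => simp
    | add f₁ f₂ h₁ h₂ => simp only [add_mul, mul_add, map_add, h₁, h₂]
    | single b d =>
      rw [single_mul_single, single_mul_single, classSum_single, classSum_single, mul_comm c d,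
        Quotient.sound (Relation.ReflTransGen.single ⟨a, b, rfl, rfl⟩ : sim (a * b) (b * a))]

theorem single_sub_single_mem_commutatorSubgroup {g h : G} (hgh : sim g h) (c : C) :
    single g c - single h c ∈ commutatorSubgroup (MonoidAlgebra C G) := by
  induction hgh with
  | refl => simp [zero_mem]
  | tail _ hstep ih =>
    obtain ⟨a, b, rfl, rfl⟩ := hstep
    have hcomm : single (a * b) c - single (b * a) c
        ∈ commutatorSubgroup (MonoidAlgebra C G) :=
      AddSubgroup.subset_closure ⟨single a c, single b 1, by simp⟩
    simpa using add_mem ih hcomm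

theorem sub_mapDomain_mem_commutatorSubgroup {rep : G → G} (hrep : ∀ g, sim g (rep g))
    (f : MonoidAlgebra C G) : f - mapDomain rep f ∈ commutatorSubgroup (MonoidAlgebra C G) := by
  induction f using MonoidAlgebra.induction_linear with
  | zero => simp [zero_mem]
  | add f₁ f₂ h₁ h₂ => simpa [mapDomain_add, add_sub_add_comm] using add_mem h₁ h₂
  | single g c => simpa using single_sub_single_mem_commutatorSubgroup (hrep g) c

theorem mem_commutatorSubgroup_of_classSum_eq_zero {f : MonoidAlgebra C G}
    (hf : classSum f = 0) : f ∈ commutatorSubgroup (MonoidAlgebra C G) := by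
  let rep : G → G := fun g => (Quotient.mk (simSetoid G) g).out
  have hrep : ∀ g, sim g (rep g) := fun g =>
    Quotient.exact (Quotient.out_eq (Quotient.mk (simSetoid G) g)).symm
  have hmap : mapDomain rep f = 0 := by
    rw [← coeff_eq_zero]
    change Finsupp.mapDomain (Quotient.out ∘ Quotient.mk _) f.coeff = 0
    rw [Finsupp.mapDomain_comp, ← classSum_apply, hf, Finsupp.mapDomain_zero]
  simpa [hmap] using sub_mapDomain_mem_commutatorSubgroup hrep f

end Mul

section MulZero

variable [Mul G] [Zero G]

noncomputable def nonzeroClassSum :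
    MonoidAlgebra C G →ₗ[C] {s : Quotient (simSetoid G) // s ≠ Quotient.mk (simSetoid G) 0} →₀ C :=
  Finsupp.lsubtypeDomain {Quotient.mk (simSetoid G) 0}ᶜ ∘ₗ classSum

theorem nonzeroClassSum_apply (f : MonoidAlgebra C G) :
    nonzeroClassSum f = (classSum f).subtypeDomain (· ≠ Quotient.mk (simSetoid G) 0) :=
  rfl

theorem nonzeroClassSum_single_zero (c : C) : nonzeroClassSum (single (0 : G) c) = 0 := by
  ext ⟨s, hs⟩
  simp [nonzeroClassSum_apply, Ne.symm hs]

theorem classSum_eq_single_zero_of_nonzeroClassSum_eq_zero {f : MonoidAlgebra C G}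
    (hf : nonzeroClassSum f = 0) :
    classSum f = Finsupp.single (Quotient.mk (simSetoid G) 0) (classSum f (Quotient.mk _ 0)) := by
  ext s
  rcases eq_or_ne s (Quotient.mk _ 0) with rfl | hs
  · simp
  · rw [Finsupp.single_eq_of_ne' fun h => hs h.symm]
    exact DFunLike.congr_fun hf ⟨s, hs⟩

theorem exists_sub_single_zero_mem_commutatorSubgroup {f : MonoidAlgebra C G}
    (hf : nonzeroClassSum f = 0) :
    ∃ c : C, f - single 0 c ∈ commutatorSubgroup (MonoidAlgebra C G) :=
  ⟨classSum f (Quotient.mk _ 0), mem_commutatorSubgroup_of_classSum_eq_zero <| by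
    rw [map_sub, classSum_single, ← classSum_eq_single_zero_of_nonzeroClassSum_eq_zero hf,
      sub_self]⟩

end MulZero

section SemigroupWithZero

variable [SemigroupWithZero G]

theorem eq_single_zero_of_mem_I0 {f : MonoidAlgebra C G} (hf : f ∈ I0 C G) :
    f = single 0 (f.coeff 0) := by
  have hf' : ∀ g : G, g ≠ 0 → f.coeff g = 0 := (TwoSidedIdeal.mem_mk' _ _ _ _ _ _ f).mp hf
  ext g
  rcases eq_or_ne g 0 with rfl | hg
  · simp
  · simp [hf' g hg, Finsupp.single_eq_of_ne' fun h => hg h.symm]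

theorem single_zero_mem_I0 (c : C) : single (0 : G) c ∈ I0 C G :=
  (TwoSidedIdeal.mem_mk' _ _ _ _ _ _ _).mpr fun _ hg =>
    Finsupp.single_eq_of_ne' fun h => hg h.symm

theorem nonzeroClassSum_eq_zero_of_mem_I0 {f : MonoidAlgebra C G} (hf : f ∈ I0 C G) :
    nonzeroClassSum f = 0 := by
  rw [eq_single_zero_of_mem_I0 hf, nonzeroClassSum_single_zero]

theorem toCSR_surjective : Function.Surjective (toCSR C G) :=
  Quotient.mk''_surjective

noncomputable def toCSRHom : MonoidAlgebra C G →ₙ+* ContractedSemigroupRing C G where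
  toFun := toCSR C G
  map_mul' := RingCon.coe_mul _
  map_zero' := RingCon.coe_zero _
  map_add' := RingCon.coe_add _

theorem toCSRHom_eq_zero_iff {f : MonoidAlgebra C G} : toCSRHom f = 0 ↔ f ∈ I0 C G :=
  (RingCon.eq _).trans (TwoSidedIdeal.mem_iff _ _).symm

noncomputable def contractedTrace :
    ContractedSemigroupRing C G →
      {s : Quotient (simSetoid G) // s ≠ Quotient.mk (simSetoid G) 0} →₀ C :=
  Quotient.lift nonzeroClassSum fun f f' h => by
    rw [← sub_eq_zero, ← map_sub]
    exact nonzeroClassSum_eq_zero_of_mem_I0 ((TwoSidedIdeal.rel_iff _ _ _).mp h)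

theorem contractedTrace_add (x y : ContractedSemigroupRing C G) :
    contractedTrace (x + y) = contractedTrace x + contractedTrace y := by
  obtain ⟨f, rfl⟩ := toCSR_surjective x
  obtain ⟨f', rfl⟩ := toCSR_surjective y
  exact map_add nonzeroClassSum f f'

theorem contractedTrace_mul_comm (x y : ContractedSemigroupRing C G) :
    contractedTrace (x * y) = contractedTrace (y * x) := by
  obtain ⟨f, rfl⟩ := toCSR_surjective x
  obtain ⟨f', rfl⟩ := toCSR_surjective y
  exact congrArg (Finsupp.lsubtypeDomain (R := C) _) (classSum_mul_comm f f')

theorem mem_commutatorSubgroup_of_contractedTrace_eq_zero {x : ContractedSemigroupRing C G}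
    (hx : contractedTrace x = 0) : x ∈ commutatorSubgroup (ContractedSemigroupRing C G) := by
  obtain ⟨f, rfl⟩ := toCSR_surjective x
  obtain ⟨c, hc⟩ := exists_sub_single_zero_mem_commutatorSubgroup hx
  have hδ₀ : toCSRHom (single (0 : G) c) = 0 := toCSRHom_eq_zero_iff.mpr (single_zero_mem_I0 c)
  have hf := map_mem_commutatorSubgroup toCSRHom hc
  rwa [map_sub, hδ₀, sub_zero] at hf

end SemigroupWithZero

end

/-- For any commutative unital ring `C` and semigroup with zero `G`,
the contracted semigroup ring `\overline{CG}` admits a minimal `C`-linear trace with values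
in `C^{(S)}`, the direct sum of copies of `C` indexed by the nonzero `~`-classes `S`. -/
theorem semigroupRing_exists_minimal_trace
    (C G : Type*) [CommRing C] [SemigroupWithZero G] :
    ∃ t : ContractedSemigroupRing C G →
        ({s : Quotient (simSetoid G) // s ≠ Quotient.mk (simSetoid G) 0} →₀ C),
      (∀ x y : ContractedSemigroupRing C G, t (x + y) = t x + t y) ∧
      (∀ x y : ContractedSemigroupRing C G, t (x * y) = t (y * x)) ∧
      (∀ (c : C) (f : MonoidAlgebra C G),
        t (toCSR C G (c • f)) = c • t (toCSR C G f)) ∧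
      (∀ x : ContractedSemigroupRing C G, t x = 0 →
        x ∈ commutatorSubgroup (ContractedSemigroupRing C G)) :=
  ⟨contractedTrace, contractedTrace_add, contractedTrace_mul_comm,
    fun c f => map_smul nonzeroClassSum c f,
    fun _ => mem_commutatorSubgroup_of_contractedTrace_eq_zero⟩
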